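/- arXiv:2312.03681 — 3 statements merged into one kernel-verified Lean document; each statement's English description precedes it below -/
import Mathlib

section
/- Let s be a k × k binary image (a function from [k] × [k] to {0,1}). Then the minimum number of pixels whose values must be changed to make s border-connected is at most k²/4. -/
open Finset

/-- Two pixels are adjacent if they are at Manhattan distance 1. -/
def Adj (p q : ℕ × ℕ) : Prop :=
  (p.1 = q.1 ∧ (p.2 + 1 = q.2 ∨ q.2 + 1 = p.2)) ∨
  (p.2 = q.2 ∧ (p.1 + 1 = q.1 ∨ q.1 + 1 = p.1))

/-- A pixel lies inside the `k × k` square (0-indexed coordinates). -/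
def InSquare (k : ℕ) (p : ℕ × ℕ) : Prop := p.1 < k ∧ p.2 < k

/-- A pixel is on the border of the `k × k` square. -/
def OnBorder (k : ℕ) (p : ℕ × ℕ) : Prop :=
  InSquare k p ∧ (p.1 = 0 ∨ p.1 = k - 1 ∨ p.2 = 0 ∨ p.2 = k - 1)

/-- One step of the image graph of the `k × k` image `s`: both pixels are black,
inside the square and adjacent. -/
def BlackAdj (k : ℕ) (s : ℕ × ℕ → Bool) (p q : ℕ × ℕ) : Prop :=
  InSquare k p ∧ InSquare k q ∧ s p = true ∧ s q = true ∧ Adj p q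

/-- A `k × k` image is border-connected if every black pixel is connected, through
black pixels, to a black pixel on the border. -/
def BorderConnected (k : ℕ) (s : ℕ × ℕ → Bool) : Prop :=
  ∀ p, InSquare k p → s p = true →
    ∃ q, OnBorder k q ∧ s q = true ∧ Relation.ReflTransGen (BlackAdj k s) p q

/-- Number of pixels of the `k × k` square on which `s` and `t` differ. -/
def diffCount (k : ℕ) (s t : ℕ × ℕ → Bool) : ℕ :=
  ((Finset.range k ×ˢ Finset.range k).filter (fun p => s p ≠ t p)).card

/-- Distance of a `k × k` image to border-connectedness. -/
noncomputable def distBC (k : ℕ) (s : ℕ × ℕ → Bool) : ℕ :=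
  sInf {d | ∃ t, BorderConnected k t ∧ diffCount k s t = d}

/-- An `n × n` image is connected if its image graph is connected. -/
def ImgConnected (n : ℕ) (M : ℕ × ℕ → Bool) : Prop :=
  ∀ p q, InSquare n p → InSquare n q → M p = true → M q = true →
    Relation.ReflTransGen (BlackAdj n M) p q

/-- Distance of an `n × n` image to connectedness. -/
noncomputable def distConn (n : ℕ) (M : ℕ × ℕ → Bool) : ℕ :=
  sInf {d | ∃ t, ImgConnected n t ∧ diffCount n M t = d}

/-- The subimage of `s` whose origin is at `(u, v)`. -/
def shiftIm (s : ℕ × ℕ → Bool) (u v : ℕ) : ℕ × ℕ → Bool :=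
  fun p => s (p.1 + u, p.2 + v)

/-- The image graph of an `n × n` image: vertices are black pixels inside the square,
edges connect pixels at Manhattan distance 1. -/
def imageGraph (n : ℕ) (M : ℕ × ℕ → Bool) :
    SimpleGraph {p : ℕ × ℕ // InSquare n p ∧ M p = true} where
  Adj := fun p q => Adj p.1 q.1
  symm := ⟨by intro p q h; unfold Adj at *; omega⟩
  loopless := ⟨by intro p h; unfold Adj at h; omega⟩

/-- The number of connected components of the image graph of an `n × n` image. -/
noncomputable def numComponents (n : ℕ) (M : ℕ × ℕ → Bool) : ℕ :=
  Nat.card (imageGraph n M).ConnectedComponent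

/-
Consider four candidate border-connected images: the all-white image, and for each residue
`ε mod 3` the image `s` with every row `≡ ε (mod 3)` painted black. In the latter, every interior
row is black or adjacent to a black row, and black rows reach the border. A black pixel of `s`
differs from the all-white image only, and a white pixel `(i, j)` differs from the striped image
for `ε = i mod 3` only; so the four distances sum to `k²` and the smallest is at most `k²/4`.
-/

def stripes (ε : Fin 3) (s : ℕ × ℕ → Bool) : ℕ × ℕ → Bool :=
  fun p => s p || decide (p.1 % 3 = ε)

lemma reflTransGen_blackAdj_row_zero {k r : ℕ} {t : ℕ × ℕ → Bool} (hr : r < k)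
    (hrow : ∀ j < k, t (r, j) = true) :
    ∀ j < k, Relation.ReflTransGen (BlackAdj k t) (r, j) (r, 0)
  | 0, _ => .refl
  | j + 1, hj =>
    .head ⟨⟨hr, hj⟩, ⟨hr, by omega⟩, hrow _ hj, hrow j (by omega), .inl ⟨rfl, .inr rfl⟩⟩
      (reflTransGen_blackAdj_row_zero hr hrow j (by omega))

lemma borderConnected_stripes (k : ℕ) (ε : Fin 3) (s : ℕ × ℕ → Bool) :
    BorderConnected k (stripes ε s) := by
  rintro ⟨i, j⟩ ⟨hi, hj⟩ hblack
  have hk : 0 < k := by omega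
  have hrow : ∀ r : ℕ, r % 3 = ε → ∀ j < k, stripes ε s (r, j) = true := by
    intro r hr j _
    simp [stripes, hr]
  by_cases hborder : i = 0 ∨ i = k - 1
  · exact ⟨(i, j), ⟨⟨hi, hj⟩, by omega⟩, hblack, .refl⟩
  obtain ⟨r, hr, hrk, hir⟩ : ∃ r : ℕ, r % 3 = ε ∧ r < k ∧ (r = i ∨ r + 1 = i ∨ i + 1 = r) := by
    have := ε.isLt
    rcases (by omega : i % 3 = ε ∨ (i - 1) % 3 = ε ∨ (i + 1) % 3 = ε) with h | h | h
    · exact ⟨i, h, hi, .inl rfl⟩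
    · exact ⟨i - 1, h, by omega, by omega⟩
    · exact ⟨i + 1, h, by omega, by omega⟩
  refine ⟨(r, 0), ⟨⟨hrk, hk⟩, by omega⟩, hrow r hr 0 hk, ?_⟩
  have hpath := reflTransGen_blackAdj_row_zero hrk (hrow r hr) j hj
  rcases hir with rfl | hir
  · exact hpath
  · have hstep : BlackAdj k (stripes ε s) (i, j) (r, j) :=
      ⟨⟨hi, hj⟩, ⟨hrk, hj⟩, hblack, hrow r hr j hj, .inr ⟨rfl, by omega⟩⟩
    exact .head hstep hpath

lemma borderConnected_const_false (k : ℕ) : BorderConnected k fun _ => false := by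
  intro _ _ h
  exact absurd h Bool.false_ne_true

lemma distBC_le_diffCount {k : ℕ} {s t : ℕ × ℕ → Bool} (ht : BorderConnected k t) :
    distBC k s ≤ diffCount k s t :=
  Nat.sInf_le ⟨t, ht, rfl⟩

lemma sum_diffCount_eq_sq {ι : Type*} [Fintype ι] (k : ℕ) (s : ℕ × ℕ → Bool)
    (t : ι → ℕ × ℕ → Bool) (hunique : ∀ p, ∃! i, s p ≠ t i p) :
    ∑ i, diffCount k s (t i) = k ^ 2 := by
  classical
  have hcard : ∀ p, #{i | s p ≠ t i p} = 1 := fun p => by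
    obtain ⟨i, hi⟩ := hunique p
    rw [card_eq_one]
    exact ⟨i, by ext j; simpa using ⟨fun h => hi.2 j h, fun h => h ▸ hi.1⟩⟩
  calc ∑ i, diffCount k s (t i) = ∑ p ∈ range k ×ˢ range k, #{i | s p ≠ t i p} := by
        simp only [diffCount, card_filter]
        exact sum_comm
    _ = k ^ 2 := by simp [hcard, sq]

def candidates (s : ℕ × ℕ → Bool) : Option (Fin 3) → ℕ × ℕ → Bool
  | none => fun _ => false
  | some ε => stripes ε s

lemma existsUnique_ne_candidates (s : ℕ × ℕ → Bool) (p : ℕ × ℕ) :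
    ∃! i, s p ≠ candidates s i p := by
  cases hs : s p
  · refine ⟨some ⟨p.1 % 3, Nat.mod_lt _ (by norm_num)⟩, by simp [candidates, stripes, hs], ?_⟩
    rintro (_ | ε) h
    · simp [candidates] at h
    · simp only [candidates, stripes, hs] at h
      congr 1; ext; exact (by simpa using h : p.1 % 3 = ε).symm
  · exact ⟨none, by simp [candidates], by rintro (_ | ε) h <;> simp_all [candidates, stripes]⟩

/-- Claim 3.2: the distance of any `k × k` image to border-connectedness is at most
`k²/4`. -/
theorem dist_to_border_connectedness_le (k : ℕ) (s : ℕ × ℕ → Bool) :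
    ((distBC k s : ℝ)) ≤ (k : ℝ) ^ 2 / 4 := by
  have hle : ∀ i, distBC k s ≤ diffCount k s (candidates s i) := by
    rintro (_ | ε)
    · exact distBC_le_diffCount (borderConnected_const_false k)
    · exact distBC_le_diffCount (borderConnected_stripes k ε s)
  have h4 : 4 * distBC k s ≤ k ^ 2 :=
    calc 4 * distBC k s = ∑ _i : Option (Fin 3), distBC k s := by simp
      _ ≤ ∑ i, diffCount k s (candidates s i) := sum_le_sum fun i _ => hle i
      _ = k ^ 2 := sum_diffCount_eq_sq k s _ (existsUnique_ne_candidates s)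
  have : (4 * distBC k s : ℝ) ≤ k ^ 2 := by exact_mod_cast h4
  linarith
end

section
/- Let s be an image that is ε-far from connected in the sense used, with distance Dist(M, C) ≥ εn². If making all grid pixels of level 0 black (at most εn²/2 pixels) together with making each level-0 square border-connected yields a connected image, then Σ_{s ∈ S_0} lc(s) ≥ εn²/2. -/
open Finset

/-! Glue an optimal border-connected replacement of every level-0 square into the frame of
level-0 grid pixels made black. By hypothesis the glued image is connected, and it differs
from `M` only on grid pixels and inside squares, where it costs exactly `lc(s)`. Hence
`εn² ≤ Dist(M, C) ≤ #grid + ∑ lc(s) ≤ εn²/2 + ∑ lc(s)`. -/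

theorem exists_borderConnected_diffCount_eq_distBC (k : ℕ) (s : ℕ × ℕ → Bool) :
    ∃ u, BorderConnected k u ∧ diffCount k s u = distBC k s := by
  have hblank : BorderConnected k fun _ => false := fun _ _ h => Bool.false_ne_true h |>.elim
  exact Nat.sInf_mem (s := {d | ∃ u, BorderConnected k u ∧ diffCount k s u = d})
    ⟨_, _, hblank, rfl⟩

theorem distConn_le_diffCount {n : ℕ} (M : ℕ × ℕ → Bool) {N : ℕ × ℕ → Bool}
    (hN : ImgConnected n N) : distConn n M ≤ diffCount n M N :=
  Nat.sInf_le ⟨N, hN, rfl⟩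

theorem BorderConnected.congr {k : ℕ} {s u : ℕ × ℕ → Bool} (hu : BorderConnected k u)
    (h : ∀ p, InSquare k p → s p = u p) : BorderConnected k s := by
  have hadj : ∀ p q, BlackAdj k u p q → BlackAdj k s p q := by
    rintro p q ⟨hp, hq, hup, huq, hpq⟩
    exact ⟨hp, hq, (h p hp).trans hup, (h q hq).trans huq, hpq⟩
  intro p hp hsp
  obtain ⟨q, hq, huq, hpath⟩ := hu p hp ((h p hp).symm.trans hsp)
  exact ⟨q, hq, (h q hq.1).trans huq, Relation.ReflTransGen.mono hadj _ _ hpath⟩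

theorem diffCount_congr_right {k : ℕ} (s : ℕ × ℕ → Bool) {t u : ℕ × ℕ → Bool}
    (h : ∀ p, InSquare k p → t p = u p) : diffCount k s t = diffCount k s u := by
  unfold diffCount
  congr 1
  refine filter_congr fun p hp => ?_
  rw [mem_product, mem_range, mem_range] at hp
  rw [h p hp]

def gridPixels (n K : ℕ) : Finset (ℕ × ℕ) :=
  (range n ×ˢ range n).filter fun p => K ∣ p.1 ∨ K ∣ p.2

section Cells

variable {K : ℕ}

theorem div_mod_of_lt_pred {i : ℕ} (a : ℕ) (hi : i < K - 1) :
    (i + (a * K + 1)) / K = a ∧ (i + (a * K + 1)) % K = i + 1 := by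
  have hK : 0 < K := by omega
  have hsplit : i + (a * K + 1) = i + 1 + a * K := by ring
  rw [hsplit, Nat.add_mul_div_right _ _ hK, Nat.add_mul_mod_self_right,
    Nat.div_eq_of_lt (by omega), Nat.mod_eq_of_lt (by omega)]
  exact ⟨zero_add a, rfl⟩

theorem eq_cell_of_not_dvd (hK : 0 < K) {x : ℕ} (hx : ¬ K ∣ x) :
    x % K - 1 < K - 1 ∧ x % K - 1 + (x / K * K + 1) = x := by
  have hpos : 0 < x % K := Nat.pos_of_ne_zero fun h => hx (Nat.dvd_of_mod_eq_zero h)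
  have hlt := Nat.mod_lt x hK
  have := Nat.div_add_mod' x K
  omega

theorem div_lt_of_not_dvd {m x : ℕ} (hx : x ≤ K * m) (hdvd : ¬ K ∣ x) : x / K < m := by
  have hne : x ≠ K * m := fun h => hdvd (h ▸ dvd_mul_right K m)
  have hK : 0 < K := Nat.pos_of_ne_zero fun h => hdvd (by simp_all)
  rw [Nat.div_lt_iff_lt_mul hK, mul_comm]
  omega

/-- The cells of the `K`-grid are the `(K - 1) × (K - 1)` squares between consecutive grid
lines; this is the absolute position of the pixel `q` of cell `ab`. -/
def cellOffset (K : ℕ) (ab q : ℕ × ℕ) : ℕ × ℕ :=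
  (q.1 + (ab.1 * K + 1), q.2 + (ab.2 * K + 1))

theorem diffCount_le_card_gridPixels_add_sum {n m : ℕ} (hn : n ≤ K * m + 1)
    (M N : ℕ × ℕ → Bool) :
    diffCount n M N ≤ (gridPixels n K).card + ∑ ab ∈ range m ×ˢ range m,
      diffCount (K - 1) (shiftIm M (ab.1 * K + 1) (ab.2 * K + 1))
        (shiftIm N (ab.1 * K + 1) (ab.2 * K + 1)) := by
  set cellDiff : ℕ × ℕ → Finset (ℕ × ℕ) := fun ab =>
    ((range (K - 1) ×ˢ range (K - 1)).filter fun q =>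
      shiftIm M (ab.1 * K + 1) (ab.2 * K + 1) q ≠ shiftIm N (ab.1 * K + 1) (ab.2 * K + 1) q)
  have hcover : (range n ×ˢ range n).filter (fun p => M p ≠ N p) ⊆
      gridPixels n K ∪
        (range m ×ˢ range m).biUnion fun ab => (cellDiff ab).image (cellOffset K ab) := by
    intro p hp
    rw [mem_filter, mem_product, mem_range, mem_range] at hp
    obtain ⟨⟨hp1, hp2⟩, hMN⟩ := hp
    by_cases hgrid : K ∣ p.1 ∨ K ∣ p.2
    · exact mem_union_left _ (mem_filter.2 ⟨by simp [hp1, hp2], hgrid⟩)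
    rw [not_or] at hgrid
    have hK : 0 < K := Nat.pos_of_ne_zero fun h => by subst h; simp at hgrid; omega
    obtain ⟨hi, hx⟩ := eq_cell_of_not_dvd hK hgrid.1
    obtain ⟨hj, hy⟩ := eq_cell_of_not_dvd hK hgrid.2
    have hp : cellOffset K (p.1 / K, p.2 / K) (p.1 % K - 1, p.2 % K - 1) = p :=
      Prod.ext hx hy
    refine mem_union_right _
      (mem_biUnion.2 ⟨(p.1 / K, p.2 / K), ?_, mem_image.2 ⟨_, ?_, hp⟩⟩)
    · simp only [mem_product, mem_range]
      exact ⟨div_lt_of_not_dvd (by omega) hgrid.1, div_lt_of_not_dvd (by omega) hgrid.2⟩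
    · refine mem_filter.2 ⟨by simp [hi, hj], ?_⟩
      simpa only [shiftIm, hx, hy] using hMN
  calc diffCount n M N
      ≤ (gridPixels n K ∪ (range m ×ˢ range m).biUnion
          fun ab => (cellDiff ab).image (cellOffset K ab)).card := card_le_card hcover
    _ ≤ (gridPixels n K).card + ∑ ab ∈ range m ×ˢ range m, (cellDiff ab).card :=
        (card_union_le _ _).trans <| Nat.add_le_add_left
          (card_biUnion_le.trans (sum_le_sum fun _ _ => card_image_le)) _

def glueCells (K : ℕ) (T : ℕ × ℕ → ℕ × ℕ → Bool) : ℕ × ℕ → Bool := fun p =>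
  if K ∣ p.1 ∨ K ∣ p.2 then true else T (p.1 / K, p.2 / K) (p.1 % K - 1, p.2 % K - 1)

theorem glueCells_of_dvd (T : ℕ × ℕ → ℕ × ℕ → Bool) {p : ℕ × ℕ}
    (hp : K ∣ p.1 ∨ K ∣ p.2) :
    glueCells K T p = true :=
  if_pos hp

theorem shiftIm_glueCells (T : ℕ × ℕ → ℕ × ℕ → Bool) (ab q : ℕ × ℕ)
    (hq : InSquare (K - 1) q) :
    shiftIm (glueCells K T) (ab.1 * K + 1) (ab.2 * K + 1) q = T ab q := by
  obtain ⟨hdiv1, hmod1⟩ := div_mod_of_lt_pred ab.1 hq.1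
  obtain ⟨hdiv2, hmod2⟩ := div_mod_of_lt_pred ab.2 hq.2
  have hgrid : ¬ (K ∣ q.1 + (ab.1 * K + 1) ∨ K ∣ q.2 + (ab.2 * K + 1)) := by
    simp only [Nat.dvd_iff_mod_eq_zero, hmod1, hmod2]
    omega
  simp only [shiftIm, glueCells, if_neg hgrid, hdiv1, hdiv2, hmod1, hmod2, Nat.add_sub_cancel]

end Cells

theorem level_zero_local_cost_sum_general (e t : ℕ)
    (M : ℕ × ℕ → Bool)
    (hfar : ((distConn (2 ^ t + 1) M : ℝ)) ≥
      (1 / 2 ^ e : ℝ) * ((2 ^ t + 1 : ℕ) : ℝ) ^ 2)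
    (hgrid : ((((Finset.range (2 ^ t + 1) ×ˢ Finset.range (2 ^ t + 1)).filter
        fun p => 2 ^ (e + 2) ∣ p.1 ∨ 2 ^ (e + 2) ∣ p.2).card : ℝ)) ≤
      (1 / 2 ^ e : ℝ) * ((2 ^ t + 1 : ℕ) : ℝ) ^ 2 / 2)
    (hkey : ∀ M' : ℕ × ℕ → Bool,
      (∀ p : ℕ × ℕ, InSquare (2 ^ t + 1) p →
        (2 ^ (e + 2) ∣ p.1 ∨ 2 ^ (e + 2) ∣ p.2) → M' p = true) →
      (∀ ab ∈ Finset.range (2 ^ (t - (e + 2))) ×ˢ Finset.range (2 ^ (t - (e + 2))),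
        BorderConnected (2 ^ (e + 2) - 1)
          (shiftIm M' (ab.1 * 2 ^ (e + 2) + 1) (ab.2 * 2 ^ (e + 2) + 1))) →
      ImgConnected (2 ^ t + 1) M') :
    (∑ ab ∈ Finset.range (2 ^ (t - (e + 2))) ×ˢ Finset.range (2 ^ (t - (e + 2))),
        ((distBC (2 ^ (e + 2) - 1)
          (shiftIm M (ab.1 * 2 ^ (e + 2) + 1) (ab.2 * 2 ^ (e + 2) + 1)) : ℝ))) ≥
      (1 / 2 ^ e : ℝ) * ((2 ^ t + 1 : ℕ) : ℝ) ^ 2 / 2 := by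
  choose T hT hTcost using fun ab : ℕ × ℕ => exists_borderConnected_diffCount_eq_distBC
    (2 ^ (e + 2) - 1) (shiftIm M (ab.1 * 2 ^ (e + 2) + 1) (ab.2 * 2 ^ (e + 2) + 1))
  have hconn : ImgConnected (2 ^ t + 1) (glueCells (2 ^ (e + 2)) T) :=
    hkey _ (fun _ _ hp => glueCells_of_dvd T hp)
      (fun ab _ => (hT ab).congr (shiftIm_glueCells T ab))
  have hcells : 2 ^ t + 1 ≤ 2 ^ (e + 2) * 2 ^ (t - (e + 2)) + 1 := by
    rw [← pow_add]
    gcongr <;> omega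
  have hcount := (distConn_le_diffCount M hconn).trans <|
    (diffCount_le_card_gridPixels_add_sum hcells M _).trans_eq <| congrArg _ <|
      sum_congr rfl fun ab _ => by rw [diffCount_congr_right _ (shiftIm_glueCells T ab), hTcost]
  have hcount_real := (Nat.cast_le (α := ℝ)).2 hcount
  push_cast at hcount_real
  unfold gridPixels at hcount_real
  linarith

/-- If `M` (of size `n × n`, `n = 2^t + 1`, `ε = 1/2^e`) is `ε`-far from connected,
the grid pixels of level 0 number at most `εn²/2`, and making all grid pixels of
level 0 black together with making each level-0 square border-connected yields a
connected image, then `∑_{s ∈ S₀} lc(s) ≥ εn²/2`. -/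
theorem level_zero_local_cost_sum (e t : ℕ) (he : 1 ≤ e) (het : e + 2 ≤ t)
    (M : ℕ × ℕ → Bool)
    (hfar : ((distConn (2 ^ t + 1) M : ℝ)) ≥
      (1 / 2 ^ e : ℝ) * ((2 ^ t + 1 : ℕ) : ℝ) ^ 2)
    (hgrid : ((((Finset.range (2 ^ t + 1) ×ˢ Finset.range (2 ^ t + 1)).filter
        fun p => 2 ^ (e + 2) ∣ p.1 ∨ 2 ^ (e + 2) ∣ p.2).card : ℝ)) ≤
      (1 / 2 ^ e : ℝ) * ((2 ^ t + 1 : ℕ) : ℝ) ^ 2 / 2)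
    (hkey : ∀ M' : ℕ × ℕ → Bool,
      (∀ p : ℕ × ℕ, InSquare (2 ^ t + 1) p →
        (2 ^ (e + 2) ∣ p.1 ∨ 2 ^ (e + 2) ∣ p.2) → M' p = true) →
      (∀ ab ∈ Finset.range (2 ^ (t - (e + 2))) ×ˢ Finset.range (2 ^ (t - (e + 2))),
        BorderConnected (2 ^ (e + 2) - 1)
          (shiftIm M' (ab.1 * 2 ^ (e + 2) + 1) (ab.2 * 2 ^ (e + 2) + 1))) →
      ImgConnected (2 ^ t + 1) M') :
    (∑ ab ∈ Finset.range (2 ^ (t - (e + 2))) ×ˢ Finset.range (2 ^ (t - (e + 2))),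
        ((distBC (2 ^ (e + 2) - 1)
          (shiftIm M (ab.1 * 2 ^ (e + 2) + 1) (ab.2 * 2 ^ (e + 2) + 1)) : ℝ))) ≥
      (1 / 2 ^ e : ℝ) * ((2 ^ t + 1 : ℕ) : ℝ) ^ 2 / 2 :=
  level_zero_local_cost_sum_general e t M hfar hgrid hkey
end

section
/- For every ε ∈ (0, 1) sufficiently small and n > (1/16)·(1/ε)^{5/8}, every image in the support of the hard distribution N has at least 128εn² − 8√ε·n connected components in its image graph, and hence is ε-far from connected. -/
open Finset

/-- Coloring of the interesting window: a checkerboard of `a × a` squares, where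
each white checkerboard square not in the first column is filled with bridges
(every odd row except the last is fully black, except for one disconnecting pixel
whose position is given by `d`). -/
def windowColor (a : ℕ) (d : ℕ × ℕ × ℕ → ℕ) (u v : ℕ) : Bool :=
  let cu := u / a
  let cv := v / a
  if (cu + cv) % 2 = 0 then true
  else if cv = 0 then false
  else
    let r := u % a
    if r % 2 = 1 ∧ r + 1 < a then
      if v % a = d (cu, cv, r) then false else true
    else false

/-- An image from the hard distribution `𝒩`: an interesting window of side `ni`
at window position `(wx, wy)`, filled with the checkerboard/bridge pattern with
disconnecting pixels given by `d`, together with the column of `ni` black pixels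
immediately to its right; all other pixels are white. -/
def hardImage (ni a wx wy : ℕ) (d : ℕ × ℕ × ℕ → ℕ) : ℕ × ℕ → Bool :=
  fun p =>
    if wx * ni ≤ p.1 ∧ p.1 < wx * ni + ni ∧ wy * ni ≤ p.2 ∧ p.2 < wy * ni + ni then
      windowColor a d (p.1 - wx * ni) (p.2 - wy * ni)
    else if p.2 = wy * ni + ni ∧ wx * ni ≤ p.1 ∧ p.1 < wx * ni + ni then true
    else false

/-! Label each black pixel of the hard image by the black checkerboard cell it hangs from: a
bridge row of a white cell is cut by its white pixel into a left half attached to the black cell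
on its left and a right half attached to the one on its right, and the cells of the last column
are all joined by the vertical line. This label is constant along black edges, so the
`K / 2 * (K - 1)` black cells off the last column (`K = n_i / a_i = 16√ε·n`) lie in distinct
components.

If a connected image `t` differs from the hard image on a set `D` of pixels, a black path of `t`
starting in a cell whose label occurs nowhere in `D` or next to it never leaves that label. Two
such cells would be joined by such a path, so all cells but one carry one of the at most `5 |D|`
labels near `D`. Hence `K / 2 * (K - 1) ≤ 5 |D| + 1`, and `K / 2 * (K - 1) = 128εn² − 8√ε·n`. -/

section Labelling

variable {β ι : Type*} {n : ℕ} {M : ℕ × ℕ → Bool} {f : ℕ × ℕ → β}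

instance : Finite {p : ℕ × ℕ // InSquare n p ∧ M p = true} :=
  Finite.of_injective (fun v => ((⟨v.1.1, v.2.1.1⟩ : Fin n), (⟨v.1.2, v.2.1.2⟩ : Fin n)))
    fun v w h => by simp_all [Prod.ext_iff, Subtype.ext_iff, Fin.ext_iff]

lemma eq_of_reachable_imageGraph (hf : ∀ p q, BlackAdj n M p q → f p = f q)
    {v w : {p : ℕ × ℕ // InSquare n p ∧ M p = true}} (h : (imageGraph n M).Reachable v w) :
    f v.1 = f w.1 := by
  obtain ⟨walk⟩ := h
  induction walk with
  | nil => rfl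
  | @cons u v _ huv _ ih => exact (hf _ _ ⟨u.2.1, v.2.1, u.2.2, v.2.2, huv⟩).trans ih

lemma card_le_numComponents (hf : ∀ p q, BlackAdj n M p q → f p = f q) (S : Finset ι)
    (r : ι → ℕ × ℕ) (hr : ∀ s ∈ S, InSquare n (r s) ∧ M (r s) = true)
    (hinj : Set.InjOn (f ∘ r) S) : #S ≤ numComponents n M := by
  let g : S → (imageGraph n M).ConnectedComponent :=
    fun s => (imageGraph n M).connectedComponentMk ⟨r s, hr s s.2⟩
  have hg : Function.Injective g := fun s s' h =>
    Subtype.ext (hinj s.2 s'.2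
      (eq_of_reachable_imageGraph hf (SimpleGraph.ConnectedComponent.eq.mp h)))
  simpa [numComponents] using Nat.card_le_card_of_injective g hg

def closedNbhd (p : ℕ × ℕ) : Finset (ℕ × ℕ) :=
  {p, (p.1 + 1, p.2), (p.1 - 1, p.2), (p.1, p.2 + 1), (p.1, p.2 - 1)}

lemma mem_closedNbhd_of_adj {p q : ℕ × ℕ} (h : Adj p q) : p ∈ closedNbhd q := by
  obtain ⟨p1, p2⟩ := p
  obtain ⟨q1, q2⟩ := q
  simp only [closedNbhd, mem_insert, mem_singleton, Prod.mk.injEq]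
  unfold Adj at h
  omega

def changedPixels (n : ℕ) (M t : ℕ × ℕ → Bool) : Finset (ℕ × ℕ) :=
  (range n ×ˢ range n).filter fun p => M p ≠ t p

lemma card_changedPixels (n : ℕ) (M t : ℕ × ℕ → Bool) :
    #(changedPixels n M t) = diffCount n M t := rfl

lemma mem_changedPixels {t : ℕ × ℕ → Bool} {p : ℕ × ℕ} (hp : InSquare n p) (h : M p ≠ t p) :
    p ∈ changedPixels n M t := by
  simp only [changedPixels, mem_filter, mem_product, mem_range]
  exact ⟨hp, h⟩

variable [DecidableEq β]

def touchedLabels (n : ℕ) (M t : ℕ × ℕ → Bool) (f : ℕ × ℕ → β) : Finset β :=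
  ((changedPixels n M t).biUnion closedNbhd).image f

lemma card_touchedLabels_le (t : ℕ × ℕ → Bool) :
    #(touchedLabels n M t f) ≤ 5 * diffCount n M t := by
  calc #(touchedLabels n M t f) ≤ #((changedPixels n M t).biUnion closedNbhd) := card_image_le
    _ ≤ ∑ p ∈ changedPixels n M t, #(closedNbhd p) := card_biUnion_le
    _ ≤ ∑ _p ∈ changedPixels n M t, 5 := sum_le_sum fun _ _ => card_le_five
    _ = 5 * diffCount n M t := by rw [sum_const, smul_eq_mul, mul_comm, card_changedPixels]

lemma reflTransGen_of_not_mem_touchedLabels (hf : ∀ p q, BlackAdj n M p q → f p = f q)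
    {t : ℕ × ℕ → Bool} {p q : ℕ × ℕ} (hp : M p = true)
    (hfp : f p ∉ touchedLabels n M t f) (h : Relation.ReflTransGen (BlackAdj n t) p q) :
    M q = true ∧ f q = f p := by
  induction h with
  | refl => exact ⟨hp, rfl⟩
  | @tail b c _ hbc ih =>
    obtain ⟨hb, hc, -, htc, hadj⟩ := hbc
    have hMc : M c = t c := by
      by_contra hne
      refine hfp (ih.2 ▸ mem_image_of_mem f (mem_biUnion.mpr ⟨c, ?_, ?_⟩))
      · exact mem_changedPixels hc hne
      · exact mem_closedNbhd_of_adj hadj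
    have hMc' : M c = true := hMc.trans htc
    exact ⟨hMc', (hf b c ⟨hb, hc, ih.1, hMc', hadj⟩).symm.trans ih.2⟩

lemma card_le_five_mul_diffCount_add_one (hf : ∀ p q, BlackAdj n M p q → f p = f q)
    (S : Finset ι) (r : ι → ℕ × ℕ) (hr : ∀ s ∈ S, InSquare n (r s) ∧ M (r s) = true)
    (hinj : Set.InjOn (f ∘ r) S) {t : ℕ × ℕ → Bool} (ht : ImgConnected n t) :
    #S ≤ 5 * diffCount n M t + 1 := by
  set T := touchedLabels n M t f
  have black_of_untouched : ∀ s ∈ S, f (r s) ∉ T → t (r s) = true := fun s hs hs' => by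
    by_contra hne
    refine hs' (mem_image_of_mem f (mem_biUnion.mpr ⟨r s, ?_, ?_⟩))
    · exact mem_changedPixels (hr s hs).1 (by simp_all)
    · simp [closedNbhd]
  have untouched : #(S.filter fun s => f (r s) ∉ T) ≤ 1 := by
    refine card_le_one.mpr fun s hs s' hs' => ?_
    rw [mem_filter] at hs hs'
    have hpath := ht _ _ (hr s hs.1).1 (hr s' hs'.1).1
      (black_of_untouched s hs.1 hs.2) (black_of_untouched s' hs'.1 hs'.2)
    exact hinj hs.1 hs'.1
      (reflTransGen_of_not_mem_touchedLabels hf (hr s hs.1).2 hs.2 hpath).2.symm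
  have touched : #(S.filter fun s => f (r s) ∈ T) ≤ #T :=
    card_le_card_of_injOn (f ∘ r) (fun s hs => (mem_filter.mp hs).2)
      (hinj.mono (filter_subset _ _))
  have := card_filter_add_card_filter_not (s := S) (fun s => f (r s) ∈ T)
  have : #T ≤ 5 * diffCount n M t := card_touchedLabels_le t
  omega

lemma card_le_five_mul_distConn_add_one (hf : ∀ p q, BlackAdj n M p q → f p = f q)
    (S : Finset ι) (r : ι → ℕ × ℕ) (hr : ∀ s ∈ S, InSquare n (r s) ∧ M (r s) = true)
    (hinj : Set.InjOn (f ∘ r) S) : #S ≤ 5 * distConn n M + 1 := by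
  have hwhite : ImgConnected n fun _ => false := by
    intro _ _ _ _ h
    simp at h
  obtain ⟨t, ht, hdist⟩ := Nat.sInf_mem (s := {d | ∃ t, ImgConnected n t ∧ diffCount n M t = d})
    ⟨_, _, hwhite, rfl⟩
  rw [distConn, ← hdist]
  exact card_le_five_mul_diffCount_add_one hf S r hr hinj ht

end Labelling

section HardImage

variable {a K wx wy : ℕ} {d : ℕ × ℕ × ℕ → ℕ}

lemma succ_div_mod_cases (ha : 0 < a) (v : ℕ) :
    ((v + 1) / a = v / a ∧ (v + 1) % a = v % a + 1) ∨
      (v % a + 1 = a ∧ (v + 1) / a = v / a + 1 ∧ (v + 1) % a = 0) := by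
  have hv := Nat.div_add_mod v a
  have hlt := Nat.mod_lt v ha
  by_cases h : v % a + 1 = a
  · refine Or.inr ⟨h, (Nat.div_mod_unique ha).mpr ⟨?_, ha⟩⟩
    rw [Nat.mul_succ]
    omega
  · exact Or.inl ((Nat.div_mod_unique (c := v % a + 1) ha).mpr ⟨by omega, by omega⟩)

lemma windowColor_eq_true_iff (u v : ℕ) :
    windowColor a d u v = true ↔
      (u / a + v / a) % 2 = 0 ∨
        ((u / a + v / a) % 2 = 1 ∧ v / a ≠ 0 ∧ u % a % 2 = 1 ∧ u % a + 1 < a ∧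
          v % a ≠ d (u / a, v / a, u % a)) := by
  unfold windowColor
  dsimp only
  split_ifs <;> simp_all [-Nat.div_eq_zero_iff]

lemma hardImage_eq_true_iff (ni : ℕ) (p : ℕ × ℕ) :
    hardImage ni a wx wy d p = true ↔
      (wx * ni ≤ p.1 ∧ p.1 < wx * ni + ni ∧ wy * ni ≤ p.2 ∧ p.2 < wy * ni + ni ∧
        windowColor a d (p.1 - wx * ni) (p.2 - wy * ni) = true) ∨
      (p.2 = wy * ni + ni ∧ wx * ni ≤ p.1 ∧ p.1 < wx * ni + ni) := by
  unfold hardImage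
  split_ifs <;> simp_all
  omega

/-- The black cell `(cu, cv)` of the checkerboard; the cells of the last column are all
identified, since the vertical line joins them. -/
def cellLabel (K cu cv : ℕ) : Option (ℕ × ℕ) :=
  if cv + 1 < K then some (cu, cv) else none

/-- A bridge row of a white cell is cut by its disconnecting pixel into a left part,
attached to the black cell on its left, and a right part, attached to the one on its right. -/
def windowLabel (a K : ℕ) (d : ℕ × ℕ × ℕ → ℕ) (u v : ℕ) : Option (ℕ × ℕ) :=
  if (u / a + v / a) % 2 = 0 then cellLabel K (u / a) (v / a)
  else if v % a < d (u / a, v / a, u % a) then cellLabel K (u / a) (v / a - 1)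
  else cellLabel K (u / a) (v / a + 1)

lemma windowLabel_succ_right (ha : 0 < a) (hd : ∀ k, d k < a) {u v : ℕ}
    (hq : windowColor a d u (v + 1) = true) :
    windowLabel a K d u v = windowLabel a K d u (v + 1) := by
  have hdk := hd (u / a, v / a, u % a)
  rw [windowColor_eq_true_iff] at hq
  unfold windowLabel
  rcases succ_div_mod_cases ha v with ⟨hdiv, hmod⟩ | ⟨hlast, hdiv, hmod⟩ <;>
    rw [hdiv, hmod] at hq ⊢ <;> (try simp only [Nat.add_sub_cancel]) <;>
    split_ifs <;> first | rfl | omega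

lemma windowLabel_succ_down (ha : 0 < a) {u v : ℕ}
    (hp : windowColor a d u v = true) (hq : windowColor a d (u + 1) v = true) :
    windowLabel a K d u v = windowLabel a K d (u + 1) v := by
  rw [windowColor_eq_true_iff] at hp hq
  unfold windowLabel
  rcases succ_div_mod_cases ha u with ⟨hdiv, hmod⟩ | ⟨hlast, hdiv, hmod⟩ <;>
    rw [hdiv, hmod] at hq ⊢ <;> split_ifs <;> first | rfl | omega

lemma windowLabel_eq_none_of_succ_eq (hd : ∀ k, d k < a) {u v : ℕ} (hv : v + 1 = K * a)
    (hp : windowColor a d u v = true) : windowLabel a K d u v = none := by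
  have ha : 0 < a := Nat.pos_of_ne_zero (by rintro rfl; simp at hv)
  obtain ⟨k, rfl⟩ : ∃ k, K = k + 1 :=
    Nat.exists_eq_add_one.mpr (Nat.pos_of_ne_zero (by rintro rfl; simp at hv))
  obtain ⟨hdiv, hmod⟩ : v / a = k ∧ v % a = a - 1 :=
    (Nat.div_mod_unique ha).mpr ⟨by rw [Nat.succ_mul, mul_comm] at hv; omega, by omega⟩
  rw [windowColor_eq_true_iff, hdiv, hmod] at hp
  have hdk := hd (u / a, k, u % a)
  unfold windowLabel cellLabel
  rw [hdiv, hmod]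
  split_ifs <;> first | rfl | omega

def hardLabel (a K wx wy : ℕ) (d : ℕ × ℕ × ℕ → ℕ) (p : ℕ × ℕ) : Option (ℕ × ℕ) :=
  if p.2 < wy * (K * a) + K * a then
    windowLabel a K d (p.1 - wx * (K * a)) (p.2 - wy * (K * a))
  else none

lemma hardLabel_succ_right (ha : 0 < a) (hd : ∀ k, d k < a) {x y : ℕ}
    (hp : hardImage (K * a) a wx wy d (x, y) = true)
    (hq : hardImage (K * a) a wx wy d (x, y + 1) = true) :
    hardLabel a K wx wy d (x, y) = hardLabel a K wx wy d (x, y + 1) := by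
  rw [hardImage_eq_true_iff] at hp hq
  unfold hardLabel
  dsimp only at hp hq ⊢
  rcases hp with ⟨-, -, hy₀, hy, hc⟩ | hline
  · rcases hq with ⟨-, -, -, hy', hc'⟩ | hline'
    · rw [show y + 1 - wy * (K * a) = y - wy * (K * a) + 1 by omega] at hc' ⊢
      rw [if_pos hy, if_pos hy']
      exact windowLabel_succ_right ha hd hc'
    · rw [if_pos hy, if_neg (by omega)]
      exact windowLabel_eq_none_of_succ_eq hd (by omega) hc
  · omega

lemma hardLabel_succ_down (ha : 0 < a) {x y : ℕ}
    (hp : hardImage (K * a) a wx wy d (x, y) = true)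
    (hq : hardImage (K * a) a wx wy d (x + 1, y) = true) :
    hardLabel a K wx wy d (x, y) = hardLabel a K wx wy d (x + 1, y) := by
  rw [hardImage_eq_true_iff] at hp hq
  unfold hardLabel
  dsimp only at hp hq ⊢
  rcases hp with ⟨hx₀, -, -, hy, hc⟩ | hline
  · rcases hq with ⟨-, -, -, -, hc'⟩ | hline'
    · rw [show x + 1 - wx * (K * a) = x - wx * (K * a) + 1 by omega] at hc' ⊢
      rw [if_pos hy, if_pos hy]
      exact windowLabel_succ_down ha hc hc'
    · omega
  · rw [if_neg (by omega), if_neg (by omega)]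

lemma hardLabel_eq_of_blackAdj (ha : 0 < a) (hd : ∀ k, d k < a) {n : ℕ} {p q : ℕ × ℕ}
    (h : BlackAdj n (hardImage (K * a) a wx wy d) p q) :
    hardLabel a K wx wy d p = hardLabel a K wx wy d q := by
  obtain ⟨-, -, hp, hq, hadj⟩ := h
  obtain ⟨x, y⟩ := p
  obtain ⟨x', y'⟩ := q
  dsimp only [Adj] at hadj
  rcases hadj with ⟨rfl, rfl | rfl⟩ | ⟨rfl, rfl | rfl⟩
  · exact hardLabel_succ_right ha hd hp hq
  · exact (hardLabel_succ_right ha hd hq hp).symm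
  · exact hardLabel_succ_down ha hp hq
  · exact (hardLabel_succ_down ha hq hp).symm

lemma windowColor_cellCorner (ha : 0 < a) {cu cv : ℕ} (h : (cu + cv) % 2 = 0) :
    windowColor a d (cu * a) (cv * a) = true := by
  rw [windowColor_eq_true_iff, Nat.mul_div_cancel _ ha, Nat.mul_div_cancel _ ha]
  exact Or.inl h

lemma hardImage_cellCorner (ha : 0 < a) {cu cv : ℕ} (hu : cu < K) (hv : cv < K)
    (h : (cu + cv) % 2 = 0) :
    hardImage (K * a) a wx wy d (wx * (K * a) + cu * a, wy * (K * a) + cv * a) = true := by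
  have hu' := Nat.mul_lt_mul_of_pos_right hu ha
  have hv' := Nat.mul_lt_mul_of_pos_right hv ha
  rw [hardImage_eq_true_iff]
  left
  dsimp only
  rw [Nat.add_sub_cancel_left, Nat.add_sub_cancel_left]
  exact ⟨by omega, by omega, by omega, by omega, windowColor_cellCorner ha h⟩

lemma hardLabel_cellCorner (ha : 0 < a) {cu cv : ℕ} (hv : cv + 1 < K) (h : (cu + cv) % 2 = 0) :
    hardLabel a K wx wy d (wx * (K * a) + cu * a, wy * (K * a) + cv * a) = some (cu, cv) := by
  have hv' := Nat.mul_lt_mul_of_pos_right (show cv < K by omega) ha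
  unfold hardLabel windowLabel cellLabel
  dsimp only
  rw [if_pos (by omega), Nat.add_sub_cancel_left, Nat.add_sub_cancel_left,
    Nat.mul_div_cancel _ ha, Nat.mul_div_cancel _ ha, if_pos h, if_pos hv]

/-- The top-left pixel of the black cell in column `s.2` and row `2 * s.1 + s.2 % 2`. -/
def cellCorner (a K wx wy : ℕ) (s : ℕ × ℕ) : ℕ × ℕ :=
  (wx * (K * a) + (2 * s.1 + s.2 % 2) * a, wy * (K * a) + s.2 * a)

variable {n : ℕ}

lemma cellCorner_mem (ha : 0 < a) (hwx : wx * (K * a) + K * a < n)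
    (hwy : wy * (K * a) + K * a < n) :
    ∀ s ∈ range (K / 2) ×ˢ range (K - 1), InSquare n (cellCorner a K wx wy s) ∧
      hardImage (K * a) a wx wy d (cellCorner a K wx wy s) = true := by
  intro s hs
  rw [mem_product, mem_range, mem_range] at hs
  have hu : 2 * s.1 + s.2 % 2 < K := by omega
  have hv : s.2 < K := by omega
  have hu' := Nat.mul_lt_mul_of_pos_right hu ha
  have hv' := Nat.mul_lt_mul_of_pos_right hv ha
  exact ⟨⟨by simp only [cellCorner]; omega, by simp only [cellCorner]; omega⟩,
    hardImage_cellCorner ha hu hv (by omega)⟩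

lemma hardLabel_injOn_cellCorner (ha : 0 < a) :
    Set.InjOn (hardLabel a K wx wy d ∘ cellCorner a K wx wy)
      ↑(range (K / 2) ×ˢ range (K - 1)) := by
  intro s hs s' hs' h
  simp only [coe_product, coe_range, Set.mem_prod, Set.mem_Iio] at hs hs'
  simp only [Function.comp, cellCorner] at h
  rw [hardLabel_cellCorner ha (by omega) (by omega),
    hardLabel_cellCorner ha (by omega) (by omega), Option.some_inj, Prod.mk.injEq] at h
  exact Prod.ext (by omega) h.2

theorem card_le_numComponents_hardImage (ha : 0 < a) (hd : ∀ k, d k < a)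
    (hwx : wx * (K * a) + K * a < n) (hwy : wy * (K * a) + K * a < n) :
    K / 2 * (K - 1) ≤ numComponents n (hardImage (K * a) a wx wy d) := by
  simpa using card_le_numComponents (fun _ _ => hardLabel_eq_of_blackAdj ha hd) _ _
    (cellCorner_mem ha hwx hwy) (hardLabel_injOn_cellCorner ha)

theorem card_le_five_mul_distConn_hardImage_add_one (ha : 0 < a) (hd : ∀ k, d k < a)
    (hwx : wx * (K * a) + K * a < n) (hwy : wy * (K * a) + K * a < n) :
    K / 2 * (K - 1) ≤ 5 * distConn n (hardImage (K * a) a wx wy d) + 1 := by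
  simpa using card_le_five_mul_distConn_add_one (fun _ _ => hardLabel_eq_of_blackAdj ha hd) _ _
    (cellCorner_mem ha hwx hwy) (hardLabel_injOn_cellCorner ha)

end HardImage

lemma five_mul_lt_of_two_pow_gt {t m : ℕ}
    (hn : (2 : ℝ) ^ t > 1 / 16 * ((2 : ℝ) ^ (8 * m)) ^ ((5 : ℝ) / 8)) : 5 * m < t + 4 := by
  have hpow : ((2 : ℝ) ^ (8 * m)) ^ ((5 : ℝ) / 8) = 2 ^ (5 * m) := by
    rw [← Real.rpow_natCast, ← Real.rpow_mul zero_le_two, ← Real.rpow_natCast]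
    push_cast
    ring_nf
  rw [hpow] at hn
  have : (2 : ℝ) ^ (5 * m) < 2 ^ (t + 4) := by rw [pow_add]; linarith
  exact (pow_lt_pow_iff_right₀ one_lt_two).mp this

lemma add_mul_add_lt_succ_of_lt_div {w s N : ℕ} (h : w < N / s) : w * s + s < N + 1 := by
  rcases Nat.eq_zero_or_pos s with rfl | hs
  · simp at h
  have := (Nat.le_div_iff_mul_le hs).mp h
  rw [Nat.succ_mul] at this
  omega

section Scaling

variable {t m j : ℕ}

lemma two_pow_eq_of_add_eq (h : t + 4 = 4 * m + j) :
    (2 : ℝ) ^ t = 2 ^ (4 * m) * 2 ^ j / 16 := by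
  rw [eq_div_iff (by norm_num), show (16 : ℝ) = 2 ^ 4 by norm_num, ← pow_add, ← pow_add, h]

lemma one_div_two_pow_mul_sq (h : t + 4 = 4 * m + j) :
    (1 / 2 ^ (8 * m) : ℝ) * ((2 : ℝ) ^ t) ^ 2 = ((2 : ℝ) ^ j) ^ 2 / 256 := by
  rw [two_pow_eq_of_add_eq h, show 8 * m = 4 * m * 2 by ring, pow_mul]
  field_simp
  ring

lemma sqrt_one_div_two_pow_mul (h : t + 4 = 4 * m + j) :
    Real.sqrt (1 / 2 ^ (8 * m) : ℝ) * (2 : ℝ) ^ t = (2 : ℝ) ^ j / 16 := by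
  rw [show 8 * m = 4 * m * 2 by ring, pow_mul, ← one_div_pow, Real.sqrt_sq (by positivity),
    two_pow_eq_of_add_eq h]
  field_simp

end Scaling

theorem hard_distribution_far_from_connected_general (t e : ℕ) (he8 : 8 ∣ e)
    (hn : ((2 : ℝ) ^ t) > (1 / 16) * ((2 : ℝ) ^ e) ^ ((5 : ℝ) / 8))
    (i : ℕ)
    (wx wy : ℕ)
    (hwx : wx < 2 ^ t / 2 ^ (t + i + 4 - e / 2))
    (hwy : wy < 2 ^ t / 2 ^ (t + i + 4 - e / 2))
    (d : ℕ × ℕ × ℕ → ℕ) (hd : ∀ key, d key < 2 ^ i) :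
    ((numComponents (2 ^ t + 1)
        (hardImage (2 ^ (t + i + 4 - e / 2)) (2 ^ i) wx wy d) : ℝ)) ≥
      128 * (1 / 2 ^ e : ℝ) * ((2 : ℝ) ^ t) ^ 2 -
        8 * Real.sqrt (1 / 2 ^ e : ℝ) * (2 : ℝ) ^ t ∧
    ((distConn (2 ^ t + 1)
        (hardImage (2 ^ (t + i + 4 - e / 2)) (2 ^ i) wx wy d) : ℝ)) ≥
      (1 / 2 ^ e : ℝ) * ((2 : ℝ) ^ t) ^ 2 := by
  obtain ⟨m, rfl⟩ := he8
  have h5m := five_mul_lt_of_two_pow_gt hn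
  obtain ⟨j, hj⟩ : ∃ j, t + 4 = 4 * m + j := ⟨t + 4 - 4 * m, by omega⟩
  have hni : 2 ^ (t + i + 4 - 8 * m / 2) = 2 ^ j * 2 ^ i := by rw [← pow_add]; congr 1; omega
  rw [hni] at hwx hwy ⊢
  have hK : (4 : ℝ) ≤ 2 ^ j := by exact_mod_cast Nat.pow_le_pow_right two_pos (by omega : 2 ≤ j)
  have hcast : ((2 ^ j / 2 * (2 ^ j - 1) : ℕ) : ℝ) = 2 ^ j / 2 * (2 ^ j - 1) := by
    rw [Nat.cast_mul, Nat.cast_div (dvd_pow_self 2 (by omega)) two_ne_zero,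
      Nat.cast_sub Nat.one_le_two_pow]
    push_cast
    rfl
  have hcount := card_le_numComponents_hardImage (Nat.two_pow_pos i) hd
    (add_mul_add_lt_succ_of_lt_div hwx) (add_mul_add_lt_succ_of_lt_div hwy)
  have hdist := card_le_five_mul_distConn_hardImage_add_one (Nat.two_pow_pos i) hd
    (add_mul_add_lt_succ_of_lt_div hwx) (add_mul_add_lt_succ_of_lt_div hwy)
  rw [← @Nat.cast_le ℝ, hcast] at hcount hdist
  rw [mul_assoc, one_div_two_pow_mul_sq hj, mul_assoc 8, sqrt_one_div_two_pow_mul hj]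
  push_cast at hdist
  constructor <;> nlinarith

/-- Every image in the support of the hard distribution `𝒩` (with `n = 2^t`,
`ε = 1/2^e`, level `i ∈ {e/8,…,e/4}`, `a_i = 2^i`, `n_i = 16·√ε·n·a_i`, and
`n > (1/16)(1/ε)^{5/8}`) has at least `128εn² − 8√ε·n` connected components in its
image graph, and hence is `ε`-far from connected. -/
theorem hard_distribution_far_from_connected (t e : ℕ) (he8 : 8 ∣ e) (he : 16 ≤ e)
    (hn : ((2 : ℝ) ^ t) > (1 / 16) * ((2 : ℝ) ^ e) ^ ((5 : ℝ) / 8))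
    (i : ℕ) (hi1 : e / 8 ≤ i) (hi2 : i ≤ e / 4)
    (wx wy : ℕ)
    (hwx : wx < 2 ^ t / 2 ^ (t + i + 4 - e / 2))
    (hwy : wy < 2 ^ t / 2 ^ (t + i + 4 - e / 2))
    (d : ℕ × ℕ × ℕ → ℕ) (hd : ∀ key, d key < 2 ^ i) :
    ((numComponents (2 ^ t + 1)
        (hardImage (2 ^ (t + i + 4 - e / 2)) (2 ^ i) wx wy d) : ℝ)) ≥
      128 * (1 / 2 ^ e : ℝ) * ((2 : ℝ) ^ t) ^ 2 -
        8 * Real.sqrt (1 / 2 ^ e : ℝ) * (2 : ℝ) ^ t ∧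
    ((distConn (2 ^ t + 1)
        (hardImage (2 ^ (t + i + 4 - e / 2)) (2 ^ i) wx wy d) : ℝ)) ≥
      (1 / 2 ^ e : ℝ) * ((2 : ℝ) ^ t) ^ 2 :=
  hard_distribution_far_from_connected_general t e he8 hn i wx wy hwx hwy d hd
end
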